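/- Let g : ℝ^N → ℝ be convex and superlinear, i.e. g(ζ)/|ζ| → +∞ as |ζ| → +∞. Then for every R > 0 there exists M > 0 such that: for every ξ ∈ ℝ^N with |ξ| ≤ R, every a in the subdifferential ∂g(ξ), and every ζ ∈ ℝ^N satisfying g(ζ) = g(ξ) + a·(ζ − ξ), one has |ζ| ≤ M. -/
import Mathlib


open MeasureTheory Set Filter Topology RealInnerProductSpace
open scoped Classical

noncomputable section

/-- `ℝ^N` with the Euclidean structure. -/
abbrev Euc (N : ℕ) : Type := EuclideanSpace ℝ (Fin N)

/-- The subdifferential of a real-valued (convex) function at `ξ`. -/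
def subdiffR {N : ℕ} (g : Euc N → ℝ) (ξ : Euc N) : Set (Euc N) :=
  {a | ∀ ζ : Euc N, g ξ + ⟪a, ζ - ξ⟫ ≤ g ζ}

/-- The uniform bound from the proof of Theorem 4.2: for a convex superlinear `g : ℝ^N → ℝ`,
for every `R > 0` there is `M > 0` bounding every point `ζ` at which some affine function
touching `g` at a point of `B̄(0,R)` touches `g` again. -/
theorem stmt15 {N : ℕ} (g : Euc N → ℝ) (hconv : ConvexOn ℝ Set.univ g)
    (hsuper : Tendsto (fun ζ : Euc N => g ζ / ‖ζ‖)
      (comap (fun ζ : Euc N => ‖ζ‖) atTop) atTop) :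
    ∀ R : ℝ, 0 < R → ∃ M : ℝ, 0 < M ∧
      ∀ ξ : Euc N, ‖ξ‖ ≤ R → ∀ a ∈ subdiffR g ξ, ∀ ζ : Euc N,
        g ζ = g ξ + ⟪a, ζ - ξ⟫ → ‖ζ‖ ≤ M := by
  intro R hR
  -- g is continuous (convex on finite-dimensional space)
  have hcont : Continuous g := by
    have := hconv.continuousOn isOpen_univ
    exact continuousOn_univ.mp this
  -- bound |g| on the closed ball of radius R + 1
  obtain ⟨C, hC⟩ := (isCompact_closedBall (0 : Euc N) (R + 1)).exists_bound_of_continuousOn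
    hcont.continuousOn
  set C' : ℝ := max C 1 with hC'def
  have hC'1 : (1 : ℝ) ≤ C' := le_max_right _ _
  have hC'0 : (0 : ℝ) < C' := lt_of_lt_of_le one_pos hC'1
  have hCb : ∀ x : Euc N, ‖x‖ ≤ R + 1 → |g x| ≤ C' := by
    intro x hx
    refine le_trans ?_ (le_max_left C 1)
    have := hC x (by simpa [Metric.mem_closedBall, dist_zero_right] using hx)
    simpa using this
  -- bound the subgradients
  have ha_bound : ∀ ξ : Euc N, ‖ξ‖ ≤ R → ∀ a ∈ subdiffR g ξ, ‖a‖ ≤ 2 * C' := by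
    intro ξ hξ a ha
    rcases eq_or_ne a 0 with rfl | hne
    · simpa using (by positivity : (0:ℝ) ≤ 2 * C')
    have hna : (0:ℝ) < ‖a‖ := norm_pos_iff.mpr hne
    set v : Euc N := ‖a‖⁻¹ • a with hv
    have hnv : ‖v‖ = 1 := by
      rw [hv, norm_smul]
      simp [abs_of_nonneg (inv_nonneg.mpr hna.le), inv_mul_cancel₀ hna.ne']
    have hav : ⟪a, v⟫ = ‖a‖ := by
      rw [hv, real_inner_smul_right, real_inner_self_eq_norm_sq]
      field_simp
    have h1 := ha (ξ + v)
    have h2 : (ξ + v) - ξ = v := by abel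
    rw [h2, hav] at h1
    have hb1 : |g ξ| ≤ C' := hCb ξ (by linarith)
    have hb2 : |g (ξ + v)| ≤ C' := hCb _ (le_trans (norm_add_le _ _) (by rw [hnv]; linarith))
    have := abs_le.mp hb1
    have := abs_le.mp hb2
    linarith
  -- superlinearity: get r with g ζ ≥ (2C'+1)‖ζ‖ for ‖ζ‖ ≥ r
  have hev : ∀ᶠ ζ in comap (fun ζ : Euc N => ‖ζ‖) atTop,
      2 * C' + 1 ≤ g ζ / ‖ζ‖ := hsuper.eventually (eventually_ge_atTop _)
  rw [eventually_comap] at hev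
  obtain ⟨r, hr⟩ := eventually_atTop.mp hev
  set r' : ℝ := max r 1 with hr'def
  have hgrow : ∀ ζ : Euc N, r' ≤ ‖ζ‖ → (2 * C' + 1) * ‖ζ‖ ≤ g ζ := by
    intro ζ hζ
    have h1 : (1:ℝ) ≤ ‖ζ‖ := le_trans (le_max_right _ _) hζ
    have h0 : (0:ℝ) < ‖ζ‖ := lt_of_lt_of_le one_pos h1
    have := hr ‖ζ‖ (le_trans (le_max_left _ _) hζ) ζ rfl
    calc (2 * C' + 1) * ‖ζ‖ ≤ (g ζ / ‖ζ‖) * ‖ζ‖ := by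
          apply mul_le_mul_of_nonneg_right this h0.le
      _ = g ζ := by field_simp
  refine ⟨max r' (C' * (1 + 2 * R)), lt_of_lt_of_le one_pos
    (le_trans (le_max_right _ _) (le_max_left _ _)), ?_⟩
  intro ξ hξ a ha ζ hζ
  rcases le_or_gt ‖ζ‖ r' with h | h
  · exact le_trans h (le_max_left _ _)
  -- main estimate
  have hgζ : g ζ ≤ C' + 2 * C' * (‖ζ‖ + R) := by
    rw [hζ]
    have h1 : g ξ ≤ C' := (abs_le.mp (hCb ξ (by linarith))).2
    have h2 : ⟪a, ζ - ξ⟫ ≤ ‖a‖ * ‖ζ - ξ‖ := real_inner_le_norm _ _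
    have h3 : ‖a‖ ≤ 2 * C' := ha_bound ξ hξ a ha
    have h4 : ‖ζ - ξ‖ ≤ ‖ζ‖ + R := le_trans (norm_sub_le _ _) (by linarith)
    have h5 : ‖a‖ * ‖ζ - ξ‖ ≤ 2 * C' * (‖ζ‖ + R) :=
      mul_le_mul h3 h4 (norm_nonneg _) (by positivity)
    linarith
  have hlow := hgrow ζ h.le
  have : ‖ζ‖ ≤ C' + 2 * C' * R := by nlinarith
  refine le_trans ?_ (le_max_right r' _)
  nlinarith
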